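/- arXiv:1809.09591 — 4 statements merged into one kernel-verified Lean document; each statement's English description precedes it below -/
import Mathlib

section
/- Let Γ = (V, E) be a finite simple graph whose complement Γ̄ is connected. Then there exists a linear order < on V such that the shortlex automaton 𝓐 of Γ with respect to <, restricted to its nonempty states, is strongly connected: for any two nonempty cliques s and t of Γ there is a directed path of transitions from s to t. -/
open Filter

noncomputable section

/-- A transition of the geodesic automaton of a graph `Γ`: from the state `s`
one may read a letter `v ∉ s` and move to the state `{v} ∪ (st(v) ∩ s)`. -/
def geoTrans {V : Type*} (Γ : SimpleGraph V) (s t : Set V) : Prop :=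
  ∃ v : V, v ∉ s ∧ t = insert v (Γ.neighborSet v ∩ s)

/-- A transition of the shortlex automaton of `Γ` with respect to a linear
order `lo` on the vertices: a geodesic transition reading `v` is kept only if
`st(v) ∩ s = ∅` or `v < min (st(v) ∩ s)`, i.e. `v` is smaller than every
element of `st(v) ∩ s`. -/
def slTrans {V : Type*} (Γ : SimpleGraph V) (lo : LinearOrder V) (s t : Set V) : Prop :=
  ∃ v : V, v ∉ s ∧ (∀ w ∈ Γ.neighborSet v ∩ s, lo.lt v w) ∧
    t = insert v (Γ.neighborSet v ∩ s)

/-! Order the vertices by distance in `Γᶜ` from a fixed root; then every vertex other than the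
minimum has a smaller vertex not adjacent to it in `Γ`. By induction on initial segments `W`, the
nonempty cliques inside `W` are mutually reachable by transitions staying in `W`. Let the new
maximum `T` have a smaller non-neighbour `u`. A clique `s ∋ T` first escapes below `T`: a path
below `T` from `s \ {T}` to `{u}` lifts to a path from `s` that keeps `T` as long as the letters
read are adjacent to `T`, and since `{T, u}` is not a clique, `T` is dropped at some point. A
clique `t ∋ T` is reached via `{u} → {T}`, then reading the other elements of `t` in decreasing
order. -/

open Relation

section

variable {V : Type*} {Γ : SimpleGraph V} {lo : LinearOrder V} {s t : Set V}

theorem slTrans.isClique (h : slTrans Γ lo s t) (hs : Γ.IsClique s) : Γ.IsClique t := by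
  obtain ⟨v, -, -, rfl⟩ := h
  exact (hs.subset Set.inter_subset_right).insert fun _ hw _ => hw.1

theorem slTrans.nonempty (h : slTrans Γ lo s t) : t.Nonempty := by
  obtain ⟨v, -, -, rfl⟩ := h
  exact Set.insert_nonempty _ _

end

section

variable {V : Type*} [LinearOrder V] {Γ : SimpleGraph V} {W s t : Set V}

variable (Γ) in
def slTransOn (W s t : Set V) : Prop :=
  slTrans Γ ‹_› s t ∧ t ⊆ W

variable (Γ) in
def SlStronglyConnectedOn (W : Set V) : Prop :=
  ∀ ⦃s t : Set V⦄, Γ.IsClique s → s.Nonempty → s ⊆ W → Γ.IsClique t → t.Nonempty → t ⊆ W →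
    ReflTransGen (slTransOn Γ W) s t

theorem slTransOn_mono {W' : Set V} (hW : W ⊆ W') (h : slTransOn Γ W s t) :
    slTransOn Γ W' s t :=
  ⟨h.1, h.2.trans hW⟩

theorem slTransOn_singleton {v : V} (hvW : v ∈ W) (hvs : v ∉ s) (hadj : ∀ w ∈ s, ¬Γ.Adj v w) :
    slTransOn Γ W s {v} := by
  have hN : Γ.neighborSet v ∩ s = ∅ :=
    Set.eq_empty_of_forall_notMem fun w hw => hadj w hw.2 hw.1
  refine ⟨⟨v, hvs, ?_, ?_⟩, Set.singleton_subset_iff.2 hvW⟩ <;> simp [hN]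

theorem slTransOn_insert {v : V} (hvW : v ∈ W) (hsW : s ⊆ W) (hadj : ∀ w ∈ s, Γ.Adj v w)
    (hlt : ∀ w ∈ s, v < w) : slTransOn Γ W s (insert v s) := by
  have hN : Γ.neighborSet v ∩ s = s := Set.inter_eq_right.2 hadj
  refine ⟨⟨v, fun hv => (hlt v hv).false, ?_, by rw [hN]⟩, Set.insert_subset hvW hsW⟩
  rw [hN]
  exact hlt

theorem isClique_of_reflTransGen_slTransOn (h : ReflTransGen (slTransOn Γ W) s t)
    (hs : Γ.IsClique s) : Γ.IsClique t := by
  induction h with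
  | refl => exact hs
  | tail _ hst ih => exact hst.1.isClique ih

theorem reflTransGen_slTransOn_singleton_insert {x : V} (t : Finset V) (hlt : ∀ y ∈ t, y < x)
    (ht : Γ.IsClique (insert x (t : Set V))) (htW : insert x (t : Set V) ⊆ W) :
    ReflTransGen (slTransOn Γ W) {x} (insert x t) := by
  induction t using Finset.induction_on_min with
  | empty => simpa using ReflTransGen.refl
  | insert a t hat ih =>
    simp only [Finset.coe_insert, Finset.mem_insert, forall_eq_or_imp] at hlt ht htW ⊢
    rw [Set.insert_comm] at ht htW ⊢
    have ha : ∀ w ∈ insert x (t : Set V), a < w := by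
      rintro w (rfl | hw)
      exacts [hlt.1, hat w hw]
    have htW' : insert x (t : Set V) ⊆ W := (Set.subset_insert _ _).trans htW
    refine (ih hlt.2 (ht.subset (Set.subset_insert _ _)) htW').tail
      (slTransOn_insert (htW (Set.mem_insert _ _)) htW' (fun w hw => ?_) ha)
    exact ht (Set.mem_insert _ _) (Set.mem_insert_of_mem _ hw) (ha w hw).ne

theorem reflTransGen_slTransOn_singleton_of_isGreatest {x : V} (htf : t.Finite)
    (hx : IsGreatest t x) (ht : Γ.IsClique t) (htW : t ⊆ W) :
    ReflTransGen (slTransOn Γ W) {x} t := by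
  obtain ⟨t', ht'⟩ := (htf.sdiff (t := {x})).exists_finset_coe
  have hinsert : t = insert x ↑t' := by
    rw [ht', Set.insert_sdiff_singleton, Set.insert_eq_of_mem hx.1]
  rw [hinsert] at ht htW ⊢
  refine reflTransGen_slTransOn_singleton_insert t' (fun y hy => ?_) ht htW
  rw [← Finset.mem_coe, ht'] at hy
  exact (hx.2 hy.1).lt_of_ne hy.2

theorem slTrans_insert_or {B B' : Set V} {T : V} (h : slTrans Γ ‹_› B B')
    (hlt : ∀ x ∈ B', x < T) :
    slTrans Γ ‹_› (insert T B) (insert T B') ∨ slTrans Γ ‹_› (insert T B) B' := by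
  obtain ⟨v, hv, hcond, rfl⟩ := h
  have hvT : v < T := hlt v (Set.mem_insert _ _)
  have hvTB : v ∉ insert T B := by simp [hvT.ne, hv]
  have hcond' : ∀ w ∈ Γ.neighborSet v ∩ insert T B, v < w := by
    rintro w ⟨hw, rfl | hwB⟩
    exacts [hvT, hcond w ⟨hw, hwB⟩]
  by_cases hadj : Γ.Adj v T
  · left
    refine ⟨v, hvTB, hcond', ?_⟩
    rw [Set.inter_insert_of_mem (show T ∈ Γ.neighborSet v from hadj), Set.insert_comm]
  · right
    refine ⟨v, hvTB, hcond', ?_⟩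
    rw [Set.inter_insert_of_notMem (show T ∉ Γ.neighborSet v from hadj)]

theorem reflTransGen_slTransOn_insert_or_exists {T : V} (hlt : ∀ x ∈ W, x < T) {A B : Set V}
    (h : ReflTransGen (slTransOn Γ W) A B) :
    ReflTransGen (slTransOn Γ (insert T W)) (insert T A) (insert T B) ∨
      ∃ C, C.Nonempty ∧ C ⊆ W ∧ ReflTransGen (slTransOn Γ (insert T W)) (insert T A) C := by
  induction h with
  | refl => exact .inl .refl
  | @tail B B' _ hst ih =>
    rcases ih with ih | ih
    · rcases slTrans_insert_or hst.1 fun x hx => hlt x (hst.2 hx) with h | h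
      · exact .inl (ih.tail ⟨h, Set.insert_subset_insert hst.2⟩)
      · exact .inr ⟨B', hst.1.nonempty, hst.2, ih.tail ⟨h, hst.2.trans (Set.subset_insert _ _)⟩⟩
    · exact .inr ih

variable {T u : V}

theorem SlStronglyConnectedOn.exists_reflTransGen_subset (h : SlStronglyConnectedOn Γ W)
    (hlt : ∀ x ∈ W, x < T) (hu : u ∈ W) (huT : ¬Γ.Adj u T)
    (hs : Γ.IsClique s) (hsne : s.Nonempty) (hsW : s ⊆ insert T W) :
    ∃ s₀, Γ.IsClique s₀ ∧ s₀.Nonempty ∧ s₀ ⊆ W ∧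
      ReflTransGen (slTransOn Γ (insert T W)) s s₀ := by
  by_cases hTs : T ∈ s
  swap
  · exact ⟨s, hs, hsne, (Set.subset_insert_iff_of_notMem hTs).1 hsW, .refl⟩
  have huT' : u ≠ T := (hlt u hu).ne
  rcases (s \ {T}).eq_empty_or_nonempty with hA | hA
  · have hsT : s = {T} :=
      (Set.sdiff_eq_empty.1 hA).antisymm (Set.singleton_subset_iff.2 hTs)
    subst hsT
    exact ⟨{u}, Γ.isClique_singleton u, Set.singleton_nonempty u,
      Set.singleton_subset_iff.2 hu, .single (slTransOn_singleton (Set.mem_insert_of_mem _ hu)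
        (by simpa using huT') (by simpa using huT))⟩
  · have hins : insert T (s \ {T}) = s := by
      rw [Set.insert_sdiff_singleton, Set.insert_eq_of_mem hTs]
    have hpath := h (hs.subset Set.sdiff_subset) hA (fun x hx => (hsW hx.1).resolve_left hx.2)
      (Γ.isClique_singleton u) (Set.singleton_nonempty u) (Set.singleton_subset_iff.2 hu)
    rcases reflTransGen_slTransOn_insert_or_exists hlt hpath with hpath | ⟨C, hCne, hCW, hpath⟩ <;>
      rw [hins] at hpath
    · exact absurd ((isClique_of_reflTransGen_slTransOn hpath hs)
        (Set.mem_insert_of_mem _ rfl) (Set.mem_insert _ _) huT') huT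
    · exact ⟨C, isClique_of_reflTransGen_slTransOn hpath hs, hCne, hCW, hpath⟩

theorem SlStronglyConnectedOn.insert_of_forall_lt (h : SlStronglyConnectedOn Γ W) (hWf : W.Finite)
    (hlt : ∀ x ∈ W, x < T) (hu : u ∈ W) (huT : ¬Γ.Adj u T) :
    SlStronglyConnectedOn Γ (insert T W) := by
  intro s t hs hsne hsW ht htne htW
  obtain ⟨s₀, hs₀, hs₀ne, hs₀W, hss₀⟩ := h.exists_reflTransGen_subset hlt hu huT hs hsne hsW
  have hmono : ∀ {a b}, ReflTransGen (slTransOn Γ W) a b →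
      ReflTransGen (slTransOn Γ (insert T W)) a b :=
    ReflTransGen.mono (fun _ _ => slTransOn_mono (Set.subset_insert _ _)) _ _
  refine hss₀.trans ?_
  by_cases hTt : T ∈ t
  · have hs₀u := h hs₀ hs₀ne hs₀W (Γ.isClique_singleton u) (Set.singleton_nonempty u)
      (Set.singleton_subset_iff.2 hu)
    have huT' : slTransOn Γ (insert T W) {u} {T} := slTransOn_singleton (Set.mem_insert _ _)
      (by simpa using (hlt u hu).ne') (by simpa using fun h => huT h.symm)
    have hTt' := reflTransGen_slTransOn_singleton_of_isGreatest ((hWf.insert T).subset htW)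
      ⟨hTt, fun y hy => (htW hy).elim Eq.le fun hy => (hlt y hy).le⟩ ht htW
    exact (hmono hs₀u).trans (hTt'.head huT')
  · exact hmono (h hs₀ hs₀ne hs₀W ht htne ((Set.subset_insert_iff_of_notMem hTt).1 htW))

theorem slStronglyConnectedOn_of_isLowerSet (hord : ∀ v : V, ¬IsMin v → ∃ u < v, ¬Γ.Adj u v)
    (W : Finset V) (hW : IsLowerSet (W : Set V)) : SlStronglyConnectedOn Γ W := by
  induction W using Finset.induction_on_max with
  | empty =>
    intro s _ _ hsne hsW
    simp_all
  | insert T W hlt ih =>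
    rw [Finset.coe_insert] at hW ⊢
    have hW' : IsLowerSet (W : Set V) := fun a b hab hb =>
      (hW hab (Set.mem_insert_of_mem _ hb)).resolve_left ((hab.trans_lt (hlt a hb)).ne)
    rcases W.eq_empty_or_nonempty with rfl | ⟨w, hw⟩
    · intro s t _ hsne hsW _ htne htW
      rw [Finset.coe_empty, LawfulSingleton.insert_empty_eq] at hsW htW
      rw [hsne.subset_singleton_iff.1 hsW, htne.subset_singleton_iff.1 htW]
    · obtain ⟨u, huT, hu⟩ := hord T (not_isMin_iff.2 ⟨w, hlt w hw⟩)
      exact (ih hW').insert_of_forall_lt W.finite_toSet hlt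
        ((hW huT.le (Set.mem_insert _ _)).resolve_left huT.ne) hu

end

theorem SimpleGraph.Reachable.exists_adj_dist_lt {V : Type*} {G : SimpleGraph V} {r v : V}
    (h : G.Reachable r v) (hne : r ≠ v) : ∃ u, G.Adj u v ∧ G.dist r u < G.dist r v := by
  obtain ⟨p, hp⟩ := h.symm.exists_walk_length_eq_dist
  cases p with
  | nil => exact absurd rfl hne
  | cons hadj q =>
    refine ⟨_, hadj.symm, ?_⟩
    rw [SimpleGraph.dist_comm (u := r) (v := v), ← hp, SimpleGraph.Walk.length_cons,
      SimpleGraph.dist_comm]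
    exact Nat.lt_succ_of_le (SimpleGraph.dist_le q)

theorem SimpleGraph.Connected.exists_linearOrder_exists_adj_lt {V : Type*} {G : SimpleGraph V}
    (hG : G.Connected) : ∃ _ : LinearOrder V, ∀ v : V, ¬IsMin v → ∃ u < v, G.Adj u v := by
  obtain ⟨r⟩ := hG.nonempty
  let f : V → ℕ ×ₗ Cardinal := fun v => toLex (G.dist r v, embeddingToCardinal v)
  have hf : f.Injective := fun a b hab =>
    embeddingToCardinal.injective (congrArg (fun p => (ofLex p).2) hab)
  let : LinearOrder V := LinearOrder.lift' f hf
  refine ⟨inferInstance, fun v hv => ?_⟩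
  have hvr : r ≠ v := by
    rintro rfl
    refine hv fun b hb => ?_
    change f b ≤ f r at hb
    obtain h | ⟨h, -⟩ := Prod.Lex.toLex_le_toLex.1 hb
    · simp at h
    · exact (hG.dist_eq_zero_iff.1 (h.trans SimpleGraph.dist_self)).le
  obtain ⟨u, hadj, hdist⟩ := (hG.preconnected r v).exists_adj_dist_lt hvr
  exact ⟨u, Prod.Lex.toLex_lt_toLex.2 (.inl hdist), hadj⟩

theorem shortlex_strongly_connected
    {V : Type*} [Fintype V] (Γ : SimpleGraph V) (hconn : Γᶜ.Connected) :
    ∃ lo : LinearOrder V,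
      ∀ s t : Set V, Γ.IsClique s → s.Nonempty → Γ.IsClique t → t.Nonempty →
        Relation.ReflTransGen (slTrans Γ lo) s t := by
  obtain ⟨lo, hlo⟩ := hconn.exists_linearOrder_exists_adj_lt
  have hord : ∀ v : V, ¬IsMin v → ∃ u < v, ¬Γ.Adj u v := fun v hv =>
    (hlo v hv).imp fun u ⟨huv, hadj⟩ => ⟨huv, ((Γ.compl_adj u v).1 hadj).2⟩
  have hΓ := slStronglyConnectedOn_of_isLowerSet hord Finset.univ (by simpa using isLowerSet_univ)
  refine ⟨lo, fun s t hs hsne ht htne => ?_⟩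
  exact ReflTransGen.mono (fun _ _ h => h.1) _ _ (hΓ hs hsne (by simp) ht htne (by simp))
end
end

section
/- Let Γ = (V, E) be a finite simple graph whose complement Γ̄ is connected. Then the geodesic automaton 𝓑 of Γ, restricted to its nonempty states, is strongly connected: for any two nonempty cliques s and t of Γ there is a directed path of transitions from s to t. -/
open Filter

noncomputable section

/-!
Reading a walk of `Γᶜ` from a state `s` leads to the state made of its last vertex together with
the vertices of `s` adjacent in `Γ` to every vertex of the walk: consecutive letters are
non-adjacent, so each letter is absent from the current state and may be read. A walk through
every vertex thus ends in a singleton `{v}`, and from `{v}` a clique containing `v` is reached by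
adding its remaining vertices one at a time. Connectivity of `Γᶜ` provides the walk and, as soon
as `V` has two elements, a first letter outside the clique `s`.
-/

section

variable {V : Type*} {Γ : SimpleGraph V}

lemma geoTrans_insert_of_isClique {s : Set V} {v : V} (hs : Γ.IsClique (insert v s))
    (hv : v ∉ s) : geoTrans Γ s (insert v s) := by
  have hsub : s ⊆ Γ.neighborSet v := fun y hy =>
    hs (Set.mem_insert v s) (Set.mem_insert_of_mem v hy) (ne_of_mem_of_not_mem hy hv).symm
  exact ⟨v, hv, by rw [Set.inter_eq_self_of_subset_right hsub]⟩

lemma reflTransGen_geoTrans_union {s d : Set V} (hd : d.Finite) (hsd : Γ.IsClique (s ∪ d)) :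
    Relation.ReflTransGen (geoTrans Γ) s (s ∪ d) := by
  induction d, hd using Set.Finite.induction_on with
  | empty => rw [Set.union_empty]
  | @insert a d _ _ ih =>
    rw [Set.union_insert] at hsd ⊢
    refine (ih (hsd.subset (Set.subset_insert a _))).trans ?_
    by_cases ha : a ∈ s ∪ d
    · rw [Set.insert_eq_of_mem ha]
    · exact .single (geoTrans_insert_of_isClique hsd ha)

lemma reflTransGen_geoTrans_of_subset {s t : Set V} (ht : Γ.IsClique t) (htf : t.Finite)
    (hst : s ⊆ t) : Relation.ReflTransGen (geoTrans Γ) s t := by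
  rw [← Set.union_eq_self_of_subset_left hst] at ht ⊢
  exact reflTransGen_geoTrans_union htf ht

lemma reflTransGen_geoTrans_walk {a b : V} (p : Γᶜ.Walk a b) {s : Set V} (ha : a ∉ s) :
    Relation.ReflTransGen (geoTrans Γ) s
      (insert b {y ∈ s | ∀ x ∈ p.support, Γ.Adj x y}) := by
  induction p generalizing s with
  | nil => exact .single ⟨_, ha, by ext; simp [and_comm]⟩
  | @cons a c b hac p ih =>
    obtain ⟨hne, hnadj⟩ := (SimpleGraph.compl_adj Γ a c).mp hac
    have hc : c ∉ insert a (Γ.neighborSet a ∩ s) := by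
      simp [Ne.symm hne, hnadj]
    have hstate : {y ∈ insert a (Γ.neighborSet a ∩ s) | ∀ x ∈ p.support, Γ.Adj x y}
        = {y ∈ s | ∀ x ∈ (SimpleGraph.Walk.cons hac p).support, Γ.Adj x y} := by
      ext y
      have hcp := p.start_mem_support
      simp only [Set.mem_ofPred_eq, Set.mem_insert_iff, Set.mem_inter_iff,
        SimpleGraph.mem_neighborSet, SimpleGraph.Walk.support_cons, List.mem_cons,
        forall_eq_or_imp]
      grind [SimpleGraph.adj_comm]
    exact .head ⟨a, ha, rfl⟩ (hstate ▸ ih hc)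

lemma SimpleGraph.Connected.exists_walk_forall_mem_support {G : SimpleGraph V}
    (hG : G.Connected) (l : List V) (a b : V) :
    ∃ p : G.Walk a b, ∀ x ∈ l, x ∈ p.support := by
  induction l generalizing a with
  | nil => exact ⟨(hG.preconnected a b).some, by simp⟩
  | cons z l ih =>
    obtain ⟨p, hp⟩ := ih z
    refine ⟨(hG.preconnected a z).some.append p, ?_⟩
    simp only [List.mem_cons, forall_eq_or_imp, SimpleGraph.Walk.mem_support_append_iff]
    exact ⟨.inr p.start_mem_support, fun x hx => .inr (hp x hx)⟩

lemma reflTransGen_geoTrans_singleton [Fintype V] (hconn : Γᶜ.Connected) {s : Set V}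
    {c : V} (hc : c ∉ s) (v : V) : Relation.ReflTransGen (geoTrans Γ) s {v} := by
  obtain ⟨p, hp⟩ := hconn.exists_walk_forall_mem_support Finset.univ.toList c v
  convert reflTransGen_geoTrans_walk p hc
  ext y
  simp only [Set.mem_singleton_iff, Set.mem_insert_iff, Set.mem_ofPred_eq, iff_self_or]
  exact fun ⟨_, hy⟩ => (Γ.irrefl (hy y (hp y (by simp)))).elim

lemma exists_notMem_of_isClique [Nontrivial V] (hconn : Γᶜ.Connected) {s : Set V}
    (hs : Γ.IsClique s) : ∃ c, c ∉ s := by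
  by_contra! h
  rw [Set.eq_univ_of_forall h, SimpleGraph.isClique_univ] at hs
  rw [hs, compl_top] at hconn
  exact SimpleGraph.not_connected_bot hconn

end

theorem geodesic_strongly_connected
    {V : Type*} [Fintype V] (Γ : SimpleGraph V) (hconn : Γᶜ.Connected) :
    ∀ s t : Set V, Γ.IsClique s → s.Nonempty → Γ.IsClique t → t.Nonempty →
      Relation.ReflTransGen (geoTrans Γ) s t := by
  intro s t hs hsne ht htne
  rcases subsingleton_or_nontrivial V with hV | hV
  · rw [hsne.eq_univ, htne.eq_univ]
  obtain ⟨c, hc⟩ := exists_notMem_of_isClique hconn hs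
  obtain ⟨v, hv⟩ := htne
  exact (reflTransGen_geoTrans_singleton hconn hc v).trans
    (reflTransGen_geoTrans_of_subset ht t.toFinite (Set.singleton_subset_iff.mpr hv))
end
end

section
/- Let Γ = (V, E) be a finite simple graph whose complement Γ̄ is connected and has at least 3 vertices, and let < be any linear order on V. Then there exists a vertex u ∈ V such that, in the shortlex automaton 𝓐 of Γ with respect to <, the singleton state {u} lies simultaneously on a directed cycle of length 2 and on a directed cycle of length 3. -/
open Filter

noncomputable section

/-!
A vertex `u` with two distinct neighbours `a ≠ b` in `Γᶜ` does the job. Between singleton states,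
`{x} → {y}` is a shortlex transition exactly when `x` and `y` are adjacent in `Γᶜ`, which gives the
2-cycle `{u} → {a} → {u}`. If `a, b` are also adjacent in `Γᶜ`, the triangle gives the 3-cycle
`{u} → {a} → {b} → {u}`; otherwise `ab` is an edge of `Γ`, say with `a < b`, and reading `a` in the
state `{b}` is allowed, giving `{u} → {b} → {a, b} → {u}`.
-/

open Finset in
lemma SimpleGraph.Connected.exists_adj_adj_ne {V : Type*} [Fintype V] {G : SimpleGraph V}
    (hG : G.Connected) (hcard : 3 ≤ Fintype.card V) :
    ∃ u a b : V, a ≠ b ∧ G.Adj u a ∧ G.Adj u b := by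
  classical
  by_contra! h
  have hdeg : ∀ v, G.degree v ≤ 1 := fun v ↦ card_le_one.2 fun a ha b hb ↦ by
    by_contra hab
    exact h v a b hab (by simpa using ha) (by simpa using hb)
  -- Handshake lemma against the `|V| - 1` edges of a spanning tree.
  have hsum : 2 * #G.edgeFinset ≤ Fintype.card V := by
    rw [← G.sum_degrees_eq_twice_card_edges]
    simpa using sum_le_sum fun v (_ : v ∈ univ) ↦ hdeg v
  have htree := hG.card_vert_le_card_edgeSet_add_one
  rw [Nat.card_eq_fintype_card, Nat.card_eq_fintype_card, ← G.edgeFinset_card] at htree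
  omega

section Transitions

variable {V : Type*} {Γ : SimpleGraph V} {lo : LinearOrder V}

lemma slTrans_singleton_of_forall_compl_adj {s : Set V} {u : V} (h : ∀ w ∈ s, Γᶜ.Adj w u) :
    slTrans Γ lo s {u} := by
  have hdisj : Γ.neighborSet u ∩ s = ∅ := by
    ext w
    simp only [Set.mem_inter_iff, SimpleGraph.mem_neighborSet, Set.mem_empty_iff_false,
      iff_false, not_and]
    exact fun hadj hw ↦ (h w hw).2 hadj.symm
  exact ⟨u, fun hu ↦ (h u hu).1 rfl, by simp [hdisj], by simp [hdisj]⟩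

lemma slTrans_singleton_singleton {x y : V} (h : Γᶜ.Adj x y) : slTrans Γ lo {x} {y} :=
  slTrans_singleton_of_forall_compl_adj fun _ hw ↦ (Set.mem_singleton_iff.1 hw) ▸ h

lemma slTrans_singleton_pair {c d : V} (h : Γ.Adj c d) (hlt : lo.lt c d) :
    slTrans Γ lo {d} {c, d} := by
  have hnbr : Γ.neighborSet c ∩ {d} = {d} := Set.inter_eq_right.2 (by simpa using h)
  refine ⟨c, by simpa using h.ne, ?_, by rw [hnbr]⟩
  rw [hnbr]
  rintro w rfl
  exact hlt

lemma exists_slTrans_three_cycle {u a b : V} (hab : a ≠ b) (hua : Γᶜ.Adj u a)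
    (hub : Γᶜ.Adj u b) :
    ∃ s t : Set V, slTrans Γ lo {u} s ∧ slTrans Γ lo s t ∧ slTrans Γ lo t {u} := by
  by_cases hab' : Γᶜ.Adj a b
  · exact ⟨{a}, {b}, slTrans_singleton_singleton hua, slTrans_singleton_singleton hab',
      slTrans_singleton_singleton hub.symm⟩
  have hΓ : Γ.Adj a b := by simpa [hab] using hab'
  wlog hlt : lo.lt a b generalizing a b
  · exact this hab.symm hub hua (fun h ↦ hab' h.symm) hΓ.symm
      (lt_of_le_of_ne (not_lt.1 hlt) hab.symm)
  refine ⟨{b}, {a, b}, slTrans_singleton_singleton hub, slTrans_singleton_pair hΓ hlt,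
    slTrans_singleton_of_forall_compl_adj ?_⟩
  rintro w (rfl | rfl)
  exacts [hua.symm, hub.symm]

end Transitions

theorem shortlex_singleton_on_two_and_three_cycle
    {V : Type*} [Fintype V] (Γ : SimpleGraph V) (hconn : Γᶜ.Connected)
    (hcard : 3 ≤ Fintype.card V) (lo : LinearOrder V) :
    ∃ u : V,
      (∃ s : Set V, slTrans Γ lo ({u} : Set V) s ∧ slTrans Γ lo s ({u} : Set V)) ∧
      (∃ s t : Set V, slTrans Γ lo ({u} : Set V) s ∧ slTrans Γ lo s t ∧
        slTrans Γ lo t ({u} : Set V)) := by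
  obtain ⟨u, a, b, hab, hua, hub⟩ := hconn.exists_adj_adj_ne hcard
  exact ⟨u, ⟨{a}, slTrans_singleton_singleton hua, slTrans_singleton_singleton hua.symm⟩,
    exists_slTrans_three_cycle hab hua hub⟩
end
end

section
/- Let G = W(Γ) be the right-angled Coxeter group of the graph Γ on three vertices {a, b, c} with the single edge (b, c), so that G ≅ ℤ/2 ∗ (ℤ/2 × ℤ/2), and let T = {a, b, c, bc} be the automatic generating set of G (each element of T is an involution, so T is symmetric). Then the spherical exponential growth rate of G with respect to T equals √3; in particular it is greater than 1 but is not a Perron number. -/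
open Filter Polynomial

noncomputable section

/-- The word length of `g` with respect to a generating set `S`: the least `n`
such that `g` is a product of `n` elements of `S`. -/
def wordLength {G : Type*} [Group G] (S : Set G) (g : G) : ℕ :=
  sInf {n | ∃ l : List G, (∀ x ∈ l, x ∈ S) ∧ l.length = n ∧ l.prod = g}

/-- The number of elements of word length `n`. -/
def sphericalCount {G : Type*} [Group G] (S : Set G) (n : ℕ) : ℕ :=
  Nat.card {g : G // wordLength S g = n}

/-- The spherical exponential growth rate. -/
def sphericalGrowthRate {G : Type*} [Group G] (S : Set G) : ℝ :=
  Filter.limsup (fun n : ℕ => (sphericalCount S n : ℝ) ^ ((n : ℝ)⁻¹)) atTop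

/-- A Perron number: a real algebraic integer `> 1` all of whose other conjugates
have strictly smaller absolute value. -/
def IsPerron (x : ℝ) : Prop :=
  IsIntegral ℤ x ∧ 1 < x ∧
    ∀ z : ℂ, aeval z (minpoly ℚ x) = 0 → z ≠ (x : ℂ) → ‖z‖ < x

/-- The relators of the right-angled Coxeter group of a graph `Γ`. -/
def racgRels {V : Type*} (Γ : SimpleGraph V) : Set (FreeGroup V) :=
  {r | (∃ v : V, r = FreeGroup.of v * FreeGroup.of v) ∨
       (∃ u v : V, Γ.Adj u v ∧ r = (FreeGroup.of u * FreeGroup.of v) ^ 2)}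

/-- The right-angled Coxeter group of a graph. -/
abbrev RACG {V : Type*} (Γ : SimpleGraph V) : Type _ := PresentedGroup (racgRels Γ)

/-- The standard generating set of a RACG: the images of the vertices. -/
def racgGens {V : Type*} (Γ : SimpleGraph V) : Set (RACG Γ) :=
  Set.range (PresentedGroup.of (rels := racgRels Γ))

/-- The graph on three vertices `a = 0`, `b = 1`, `c = 2` with the single
edge `(b, c)`. -/
def oneEdgeGraph : SimpleGraph (Fin 3) :=
  SimpleGraph.fromRel (fun u v => u = 1 ∧ v = 2)

/-- The automatic generating set `{a, b, c, bc}` of the RACG of `oneEdgeGraph`. -/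
def automaticGens : Set (RACG oneEdgeGraph) :=
  {PresentedGroup.of 0, PresentedGroup.of 1, PresentedGroup.of 2,
    PresentedGroup.of 1 * PresentedGroup.of 2}

namespace RacgAux

open Topology


abbrev Afac : Type := Multiplicative (ZMod 2)
abbrev Kfac : Type := Multiplicative (ZMod 2 × ZMod 2)

def Mfac : Bool → Type := fun b => cond b Kfac Afac

instance : (b : Bool) → Group (Mfac b)
  | false => inferInstanceAs (Group Afac)
  | true => inferInstanceAs (Group Kfac)

instance : (b : Bool) → DecidableEq (Mfac b)
  | false => inferInstanceAs (DecidableEq Afac)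
  | true => inferInstanceAs (DecidableEq Kfac)

instance : (b : Bool) → Fintype (Mfac b)
  | false => inferInstanceAs (Fintype Afac)
  | true => inferInstanceAs (Fintype Kfac)

def la : Mfac false := Multiplicative.ofAdd (1 : ZMod 2)
def lx : Mfac true := Multiplicative.ofAdd ((1, 0) : ZMod 2 × ZMod 2)
def ly : Mfac true := Multiplicative.ofAdd ((0, 1) : ZMod 2 × ZMod 2)

abbrev GG := Monoid.CoprodI Mfac

section homs
variable {G : Type*} [Group G]

lemma pow_mod_two {g : G} (hg : g * g = 1) (n : ℕ) : g ^ (n % 2) = g ^ n := by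
  have h2 : g ^ 2 = 1 := by rwa [pow_two]
  conv_rhs => rw [← Nat.div_add_mod n 2, pow_add, pow_mul, h2, one_pow, one_mul]

def homA (g : G) (hg : g * g = 1) : Afac →* G where
  toFun x := g ^ (x.toAdd).val
  map_one' := by simp
  map_mul' x y := by
    show g ^ ((x.toAdd + y.toAdd).val) = g ^ (x.toAdd).val * g ^ (y.toAdd).val
    rw [ZMod.val_add, pow_mod_two hg, pow_add]

def homK (g h : G) (hg : g * g = 1) (hh : h * h = 1) (hc : g * h = h * g) : Kfac →* G where
  toFun x := g ^ (x.toAdd).1.val * h ^ (x.toAdd).2.val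
  map_one' := by simp
  map_mul' x y := by
    show g ^ ((x.toAdd.1 + y.toAdd.1).val) * h ^ ((x.toAdd.2 + y.toAdd.2).val) =
      (g ^ (x.toAdd).1.val * h ^ (x.toAdd).2.val) * (g ^ (y.toAdd).1.val * h ^ (y.toAdd).2.val)
    have hcm : Commute g h := hc
    rw [ZMod.val_add, ZMod.val_add, pow_mod_two hg, pow_mod_two hh, pow_add, pow_add,
      mul_assoc, mul_assoc]
    congr 1
    rw [← mul_assoc, ← mul_assoc, (hcm.pow_pow _ _).symm.eq, mul_assoc]

end homs

-- ### the RACG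
abbrev R3 := RACG oneEdgeGraph

def ga : R3 := PresentedGroup.of 0
def gb : R3 := PresentedGroup.of 1
def gc : R3 := PresentedGroup.of 2

lemma rel_eq_one {r : FreeGroup (Fin 3)} (hr : r ∈ racgRels oneEdgeGraph) :
    PresentedGroup.mk (racgRels oneEdgeGraph) r = 1 :=
  (QuotientGroup.eq_one_iff r).2 (Subgroup.subset_normalClosure hr)

lemma sq_of (v : Fin 3) : PresentedGroup.of (rels := racgRels oneEdgeGraph) v *
    PresentedGroup.of v = 1 := by
  have := rel_eq_one (Or.inl ⟨v, rfl⟩)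
  simpa [PresentedGroup.of, map_mul] using this

lemma ha : ga * ga = 1 := sq_of 0
lemma hb : gb * gb = 1 := sq_of 1
lemma hc : gc * gc = 1 := sq_of 2

lemma adj12 : oneEdgeGraph.Adj 1 2 := by
  constructor
  · decide
  · exact Or.inl ⟨rfl, rfl⟩

lemma hbc_sq : (gb * gc) * (gb * gc) = 1 := by
  have := rel_eq_one (Or.inr ⟨1, 2, adj12, rfl⟩)
  have h : ((PresentedGroup.of 1 * PresentedGroup.of 2 : R3)) ^ 2 = 1 := by
    simpa [PresentedGroup.of, map_mul, map_pow] using this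
  rw [← pow_two]; exact h

lemma hbc : gb * gc = gc * gb := by
  have h1 : (gb * gc)⁻¹ = gb * gc := by
    rw [eq_comm, eq_inv_iff_mul_eq_one]; exact hbc_sq
  calc gb * gc = (gb * gc)⁻¹ := h1.symm
    _ = gc⁻¹ * gb⁻¹ := by rw [mul_inv_rev]
    _ = gc * gb := by
        rw [inv_eq_of_mul_eq_one_right hb, inv_eq_of_mul_eq_one_right hc]

-- ### homs between R3 and GG
open Monoid

def genIm : Fin 3 → GG := ![Monoid.CoprodI.of la, Monoid.CoprodI.of lx, Monoid.CoprodI.of ly]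

lemma genIm_sq (v : Fin 3) : genIm v * genIm v = 1 := by
  fin_cases v
  · show Monoid.CoprodI.of la * Monoid.CoprodI.of la = 1
    rw [← map_mul, show (la * la : Mfac false) = 1 by decide, map_one]
  · show Monoid.CoprodI.of lx * Monoid.CoprodI.of lx = 1
    rw [← map_mul, show (lx * lx : Mfac true) = 1 by decide, map_one]
  · show Monoid.CoprodI.of ly * Monoid.CoprodI.of ly = 1
    rw [← map_mul, show (ly * ly : Mfac true) = 1 by decide, map_one]

lemma rels_hold : ∀ r ∈ racgRels oneEdgeGraph, FreeGroup.lift genIm r = 1 := by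
  rintro r (⟨v, rfl⟩ | ⟨u, v, huv, rfl⟩)
  · simp only [map_mul, FreeGroup.lift_apply_of]
    exact genIm_sq v
  · have h12 : (u = 1 ∧ v = 2) ∨ (v = 1 ∧ u = 2) := huv.2
    rw [map_pow, map_mul, FreeGroup.lift_apply_of, FreeGroup.lift_apply_of]
    rcases h12 with ⟨rfl, rfl⟩ | ⟨rfl, rfl⟩
    · show (Monoid.CoprodI.of lx * Monoid.CoprodI.of ly : GG) ^ 2 = 1
      rw [← map_mul, ← map_pow, show ((lx * ly) ^ 2 : Mfac true) = 1 by decide, map_one]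
    · show (Monoid.CoprodI.of ly * Monoid.CoprodI.of lx : GG) ^ 2 = 1
      rw [← map_mul, ← map_pow, show ((ly * lx) ^ 2 : Mfac true) = 1 by decide, map_one]

def phi : R3 →* GG := PresentedGroup.toGroup rels_hold

def psiFam : (b : Bool) → (Mfac b →* R3)
  | false => homA ga ha
  | true => homK gb gc hb hc hbc

def psi : GG →* R3 := Monoid.CoprodI.lift psiFam

@[simp] lemma phi_ga : phi ga = Monoid.CoprodI.of la := PresentedGroup.toGroup.of rels_hold
@[simp] lemma phi_gb : phi gb = Monoid.CoprodI.of lx := PresentedGroup.toGroup.of rels_hold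
@[simp] lemma phi_gc : phi gc = Monoid.CoprodI.of ly := PresentedGroup.toGroup.of rels_hold

lemma psi_of_la : psi (Monoid.CoprodI.of la) = ga := by
  rw [psi, Monoid.CoprodI.lift_of]
  show homA ga ha la = ga
  show ga ^ (1 : ℕ) = ga
  rw [pow_one]

lemma psi_of_lx : psi (Monoid.CoprodI.of lx) = gb := by
  rw [psi, Monoid.CoprodI.lift_of]
  show homK gb gc hb hc hbc lx = gb
  show gb ^ (1 : ℕ) * gc ^ (0 : ℕ) = gb
  rw [pow_one, pow_zero, mul_one]

lemma psi_of_ly : psi (Monoid.CoprodI.of ly) = gc := by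
  rw [psi, Monoid.CoprodI.lift_of]
  show homK gb gc hb hc hbc ly = gc
  show gb ^ (0 : ℕ) * gc ^ (1 : ℕ) = gc
  rw [pow_one, pow_zero, one_mul]

lemma phipsi : phi.comp psi = MonoidHom.id GG := by
  apply Monoid.CoprodI.ext_hom
  intro i
  ext m
  show phi (psi (Monoid.CoprodI.of m)) = Monoid.CoprodI.of m
  cases i with
  | false =>
    have : m = 1 ∨ m = la := by revert m; decide
    rcases this with rfl | rfl
    · simp
    · rw [psi_of_la, phi_ga]
  | true =>
    have : m = 1 ∨ m = lx ∨ m = ly ∨ m = lx * ly := by revert m; decide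
    rcases this with rfl | rfl | rfl | rfl
    · simp
    · rw [psi_of_lx, phi_gb]
    · rw [psi_of_ly, phi_gc]
    · rw [map_mul, map_mul, psi_of_lx, psi_of_ly, map_mul, phi_gb, phi_gc]

lemma psiphi : psi.comp phi = MonoidHom.id R3 := by
  apply PresentedGroup.ext
  intro v
  fin_cases v
  · show psi (phi ga) = ga
    rw [phi_ga, psi_of_la]
  · show psi (phi gb) = gb
    rw [phi_gb, psi_of_lx]
  · show psi (phi gc) = gc
    rw [phi_gc, psi_of_ly]

def eqv : R3 ≃* GG := MonoidHom.toMulEquiv phi psi psiphi phipsi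

@[simp] lemma eqv_apply (g : R3) : eqv g = phi g := rfl

-- ### word length via normal forms
open Monoid Monoid.CoprodI


lemma wordLength_equiv {G H : Type*} [Group G] [Group H] (e : G ≃* H) (S : Set G) (g : G) :
    wordLength (⇑e '' S) (e g) = wordLength S g := by
  unfold wordLength
  congr 1
  ext n
  simp only [Set.mem_setOf_eq]
  constructor
  · rintro ⟨l, hmem, hlen, hprod⟩
    refine ⟨l.map e.symm, ?_, by simpa using hlen, ?_⟩
    · intro x hx
      rcases List.mem_map.1 hx with ⟨y, hy, rfl⟩
      rcases hmem y hy with ⟨s, hs, rfl⟩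
      simpa using hs
    · have := map_list_prod e.symm.toMonoidHom l
      simp only [MulEquiv.coe_toMonoidHom] at this
      rw [← this] at *
      rw [hprod]
      simp
  · rintro ⟨l, hmem, hlen, hprod⟩
    refine ⟨l.map e, ?_, by simpa using hlen, ?_⟩
    · intro x hx
      rcases List.mem_map.1 hx with ⟨y, hy, rfl⟩
      exact ⟨y, hmem y hy, rfl⟩
    · have := map_list_prod e.toMonoidHom l
      simp only [MulEquiv.coe_toMonoidHom] at this
      rw [← this, hprod]

def SGG : Set GG := {g | ∃ (b : Bool) (m : Mfac b), m ≠ 1 ∧ g = Monoid.CoprodI.of m}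

lemma mem_automaticGens_iff {g : R3} :
    g ∈ automaticGens ↔ g = ga ∨ g = gb ∨ g = gc ∨ g = gb * gc := by
  simp [automaticGens, ga, gb, gc, Set.mem_insert_iff]

lemma image_auto : (⇑eqv) '' automaticGens = SGG := by
  ext g
  constructor
  · rintro ⟨x, hx, rfl⟩
    rcases mem_automaticGens_iff.1 hx with rfl | rfl | rfl | rfl
    · exact ⟨false, la, by decide, by simp⟩
    · exact ⟨true, lx, by decide, by simp⟩
    · exact ⟨true, ly, by decide, by simp⟩
    · exact ⟨true, lx * ly, by decide, by simp [map_mul]⟩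
  · rintro ⟨b, m, hm, rfl⟩
    cases b with
    | false =>
      have hma : m = la := by revert m; decide
      subst hma
      exact ⟨ga, mem_automaticGens_iff.2 (Or.inl rfl), by simp⟩
    | true =>
      have hma : m = lx ∨ m = ly ∨ m = lx * ly := by
        have : ∀ m' : Mfac true, m' ≠ 1 → m' = lx ∨ m' = ly ∨ m' = lx * ly := by decide
        exact this m hm
      rcases hma with rfl | rfl | rfl
      · exact ⟨gb, mem_automaticGens_iff.2 (Or.inr (Or.inl rfl)), by simp⟩
      · exact ⟨gc, mem_automaticGens_iff.2 (Or.inr (Or.inr (Or.inl rfl))), by simp⟩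
      · exact ⟨gb * gc, mem_automaticGens_iff.2 (Or.inr (Or.inr (Or.inr rfl))), by
          simp [map_mul]⟩

abbrev W := Monoid.CoprodI.Word Mfac

def cc (g : GG) : ℕ := (Word.equiv g).toList.length

lemma equiv_apply' (g : GG) : Word.equiv g = g • Word.empty := rfl

lemma prod_equiv (g : GG) : (Word.equiv g).prod = g :=
  (Word.equiv (M := Mfac)).symm_apply_apply g

lemma length_rcons_le {i : Bool} (p : Word.Pair Mfac i) :
    (Word.rcons p).toList.length ≤ p.tail.toList.length + 1 := by
  rw [Word.rcons]
  split
  · exact Nat.le_succ _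
  · simp [Word.cons]

lemma length_tail_le (i : Bool) (w : W) :
    (Word.equivPair i w).tail.toList.length ≤ w.toList.length := by
  conv_rhs => rw [← (Word.equivPair i).symm_apply_apply w]
  rw [Word.equivPair_symm, Word.rcons]
  split
  · exact le_rfl
  · simp [Word.cons]

lemma length_of_smul_le {i : Bool} (m : Mfac i) (w : W) :
    (Monoid.CoprodI.of m • w).toList.length ≤ w.toList.length + 1 := by
  rw [Word.of_smul_def]
  refine (length_rcons_le _).trans ?_
  exact Nat.succ_le_succ (length_tail_le i w)

lemma cc_one : cc 1 = 0 := by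
  unfold cc
  rw [equiv_apply', one_smul]
  rfl

lemma cc_mul_le {i : Bool} (m : Mfac i) (g : GG) :
    cc (Monoid.CoprodI.of m * g) ≤ cc g + 1 := by
  unfold cc
  rw [equiv_apply', mul_smul]
  exact length_of_smul_le m _

lemma cc_list_le (l : List GG) (hl : ∀ x ∈ l, x ∈ SGG) : cc l.prod ≤ l.length := by
  induction l with
  | nil => simpa using cc_one.le
  | cons x xs ih =>
    rcases hl x List.mem_cons_self with ⟨b, m, hm, rfl⟩
    rw [List.prod_cons]
    exact le_trans (cc_mul_le m xs.prod)
      (Nat.succ_le_succ (ih fun y hy => hl y (List.mem_cons_of_mem _ hy)))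

lemma wordLength_SGG (g : GG) : wordLength SGG g = cc g := by
  have hwit : ∃ l : List GG, (∀ x ∈ l, x ∈ SGG) ∧ l.length = cc g ∧ l.prod = g := by
    refine ⟨(Word.equiv g).toList.map (fun p => Monoid.CoprodI.of p.2), ?_, by simp [cc], ?_⟩
    · intro x hx
      rcases List.mem_map.1 hx with ⟨p, hp, rfl⟩
      exact ⟨p.1, p.2, (Word.equiv g).ne_one p hp, rfl⟩
    · show Word.prod (Word.equiv g) = g
      exact prod_equiv g
  apply le_antisymm
  · exact Nat.sInf_le hwit
  · have hne : {n | ∃ l : List GG, (∀ x ∈ l, x ∈ SGG) ∧ l.length = n ∧ l.prod = g}.Nonempty :=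
      ⟨cc g, hwit⟩
    obtain ⟨l, hmem, hlen, hprod⟩ := Nat.sInf_mem hne
    calc cc g = cc l.prod := by rw [hprod]
      _ ≤ l.length := cc_list_le l hmem
      _ = _ := hlen

lemma wordLength_auto (g : R3) : wordLength automaticGens g = cc (eqv g) := by
  rw [← wordLength_equiv eqv automaticGens g, image_auto, wordLength_SGG]

def sphereEquiv (n : ℕ) :
    {g : R3 // wordLength automaticGens g = n} ≃ {w : W // w.toList.length = n} :=
  Equiv.subtypeEquiv (eqv.toEquiv.trans (Word.equiv)) (fun g => by
    rw [wordLength_auto]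
    exact Iff.rfl)

-- ### counting

def codeK : Mfac true → Fin 3 := fun k => if k = lx then 0 else if k = ly then 1 else 2

def extractK : (Σ b, Mfac b) → Fin 3
  | ⟨true, k⟩ => codeK k
  | ⟨false, _⟩ => 0

def ii0 (w : W) : Bool := (w.toList.head?.map Sigma.fst).getD true

def off (w : W) : ℕ := if ii0 w then 0 else 1

lemma off_le (w : W) : off w ≤ 1 := by rw [off]; split <;> omega

lemma idx_get (w : W) (k : ℕ) (hk : k < w.toList.length) :
    (w.toList[k]'hk).1 = if k % 2 = 0 then ii0 w else !(ii0 w) := by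
  induction k with
  | zero =>
    have hne : w.toList ≠ [] := List.ne_nil_of_length_pos hk
    simp only [Nat.zero_mod, if_pos rfl, ii0, List.head?_eq_head hne]
    rw [← List.head_eq_getElem_zero hne]
    rfl
  | succ k ih =>
    have hk' : k < w.toList.length := Nat.lt_of_succ_lt hk
    have hne : (w.toList[k]'hk').1 ≠ (w.toList[k+1]'hk).1 := by
      have := List.isChain_iff_getElem.1 w.chain_ne k (by omega)
      simpa [List.get_eq_getElem] using this
    have hflip : (w.toList[k+1]'hk).1 = !(w.toList[k]'hk').1 := by
      revert hne
      cases (w.toList[k]'hk').1 <;> cases (w.toList[k+1]'hk).1 <;> decide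
    rw [hflip, ih hk']
    by_cases hp : k % 2 = 0
    · have h2 : ¬((k + 1) % 2 = 0) := by omega
      simp [hp, h2]
    · have h2 : (k + 1) % 2 = 0 := by omega
      simp [hp, h2]

def Fup (n : ℕ) (w : {w : W // w.toList.length = n}) : Bool × (Fin ((n + 1) / 2) → Fin 3) :=
  (ii0 w.1, fun j => extractK (w.1.toList.getD (2 * j.val + off w.1) ⟨false, la⟩))

lemma la_unique : ∀ v : Mfac false, v ≠ 1 → v = la := by decide

lemma codeK_inj : ∀ u v : Mfac true, u ≠ 1 → v ≠ 1 → codeK u = codeK v → u = v := by decide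

lemma Fup_inj (n : ℕ) : Function.Injective (Fup n) := by
  rintro ⟨w1, h1⟩ ⟨w2, h2⟩ heq
  have hi0 : ii0 w1 = ii0 w2 := congrArg Prod.fst heq
  have hoff : off w1 = off w2 := by rw [off, off, hi0]
  have hfun := congrArg Prod.snd heq
  simp only [Fup] at hfun
  apply Subtype.ext
  show w1 = w2
  apply Monoid.CoprodI.Word.ext
  apply List.ext_getElem (by rw [h1, h2])
  intro k hk1 hk2
  have hkn : k < n := by rw [← h1]; exact hk1
  have hb1 := idx_get w1 k hk1
  have hb2 := idx_get w2 k hk2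
  have hfst : (w1.toList[k]'hk1).1 = (w2.toList[k]'hk2).1 := by
    rw [hb1, hb2, hi0]
  have hm1 : (w1.toList[k]'hk1).2 ≠ 1 := w1.ne_one _ (List.getElem_mem _)
  have hm2 : (w2.toList[k]'hk2).2 ≠ 1 := w2.ne_one _ (List.getElem_mem _)
  rcases e1 : w1.toList[k]'hk1 with ⟨b1, v1⟩
  rcases e2 : w2.toList[k]'hk2 with ⟨b2, v2⟩
  rw [e1] at hb1 hm1 hfst
  rw [e2] at hb2 hm2 hfst
  simp only at hfst hm1 hm2 hb1 hb2
  subst hfst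
  cases b1 with
  | false =>
    rw [la_unique v1 hm1, la_unique v2 hm2]
  | true =>
    have hoffle1 := off_le w1
    have hpar : k % 2 = off w1 := by
      rw [off]
      rcases hI : ii0 w1 with _ | _ <;> rw [hI] at hb1 <;>
        by_cases hp : k % 2 = 0 <;> simp [hp] at hb1 ⊢ <;> simp_all
    have hk2j : 2 * (k / 2) + off w1 = k := by omega
    have hjlt : k / 2 < (n + 1) / 2 := by omega
    have hthis := congrFun hfun ⟨k / 2, hjlt⟩
    simp only at hthis
    rw [show w1.toList.getD (2 * (k/2) + off w1) ⟨false, la⟩ = w1.toList[k]'hk1 by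
        rw [hk2j]; exact List.getD_eq_getElem _ _ hk1,
      show w2.toList.getD (2 * (k/2) + off w2) ⟨false, la⟩ = w2.toList[k]'hk2 by
        rw [← hoff, hk2j]; exact List.getD_eq_getElem _ _ hk2, e1, e2] at hthis
    have hv : v1 = v2 := codeK_inj v1 v2 hm1 hm2 hthis
    rw [hv]

instance sphereFinite (n : ℕ) : Finite {w : W // w.toList.length = n} :=
  Finite.of_injective _ (Fup_inj n)

lemma card_upper (n : ℕ) :
    Nat.card {w : W // w.toList.length = n} ≤ 2 * 3 ^ ((n + 1) / 2) := by
  have h := Nat.card_le_card_of_injective (Fup n) (Fup_inj n)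
  calc Nat.card {w : W // w.toList.length = n}
      ≤ Nat.card (Bool × (Fin ((n + 1) / 2) → Fin 3)) := h
    _ = 2 * 3 ^ ((n + 1) / 2) := by
        rw [Nat.card_eq_fintype_card, Fintype.card_prod, Fintype.card_bool, Fintype.card_fun,
          Fintype.card_fin, Fintype.card_fin]

-- ### lower bound

def decK : Fin 3 → Mfac true := ![lx, ly, lx * ly]

lemma decK_ne_one : ∀ t : Fin 3, decK t ≠ 1 := by decide
lemma decK_inj : Function.Injective decK := by decide
lemma la_ne_one : (la : Mfac false) ≠ 1 := by decide

def mkL : List (Fin 3) → List (Σ b, Mfac b)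
  | [] => []
  | t :: ts => ⟨true, decK t⟩ :: ⟨false, la⟩ :: mkL ts

lemma mkL_length (s : List (Fin 3)) : (mkL s).length = 2 * s.length := by
  induction s with
  | nil => rfl
  | cons t ts ih => simp [mkL, ih]; omega

lemma mkL_ne_one (s : List (Fin 3)) : ∀ x ∈ mkL s, x.2 ≠ 1 := by
  induction s with
  | nil => intro x hx; cases hx
  | cons t ts ih =>
    intro x hx
    rcases hx with _ | ⟨_, hx⟩
    · exact decK_ne_one t
    · rcases hx with _ | ⟨_, hx⟩
      · exact la_ne_one
      · exact ih x hx

lemma mkL_chain (s : List (Fin 3)) :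
    (mkL s).Chain' (fun a b => a.1 ≠ b.1) ∧
      ∀ x : (Σ b, Mfac b), x.1 = false → (x :: mkL s).Chain' (fun a b => a.1 ≠ b.1) := by
  induction s with
  | nil => exact ⟨List.isChain_nil, fun x _ => List.isChain_singleton x⟩
  | cons t ts ih =>
    constructor
    · exact List.isChain_cons_cons.2 ⟨by simp, ih.2 ⟨false, la⟩ rfl⟩
    · intro x hx
      refine List.isChain_cons_cons.2 ⟨by simp [hx], ?_⟩
      exact List.isChain_cons_cons.2 ⟨by simp, ih.2 ⟨false, la⟩ rfl⟩

lemma mkL_inj : Function.Injective mkL := by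
  intro s1
  induction s1 with
  | nil =>
    intro s2 h
    cases s2 with
    | nil => rfl
    | cons t ts => exact absurd h (by simp [mkL])
  | cons t ts ih =>
    intro s2 h
    cases s2 with
    | nil => exact absurd h (by simp [mkL])
    | cons u us =>
      simp only [mkL, List.cons.injEq] at h
      obtain ⟨h1, _, h2⟩ := h
      have ht : t = u := decK_inj (by
        obtain ⟨-, h1'⟩ := Sigma.mk.inj_iff.mp h1
        exact eq_of_heq h1')
      rw [ht, ih h2]

def wordEven (s : List (Fin 3)) : W :=
  ⟨mkL s, mkL_ne_one s, (mkL_chain s).1⟩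

def wordOdd (s : List (Fin 3)) : W :=
  ⟨⟨false, la⟩ :: mkL s, by
      intro x hx
      rcases hx with _ | ⟨_, hx⟩
      · exact la_ne_one
      · exact mkL_ne_one s x hx,
    (mkL_chain s).2 ⟨false, la⟩ rfl⟩

lemma card_lower (n : ℕ) :
    3 ^ (n / 2) ≤ Nat.card {w : W // w.toList.length = n} := by
  rcases Nat.even_or_odd n with ⟨m, hm⟩ | ⟨m, hm⟩
  · have hinj : Function.Injective (fun f : Fin (n / 2) → Fin 3 =>
        (⟨wordEven (List.ofFn f), by
          simp [wordEven, mkL_length, List.length_ofFn]; omega⟩ :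
          {w : W // w.toList.length = n})) := by
      intro f1 f2 h
      have := congrArg (fun z => (Subtype.val z).toList) h
      simp only [wordEven] at this
      exact List.ofFn_injective (mkL_inj this)
    have := Nat.card_le_card_of_injective _ hinj
    simpa [Nat.card_eq_fintype_card, Fintype.card_fun] using this
  · have hinj : Function.Injective (fun f : Fin (n / 2) → Fin 3 =>
        (⟨wordOdd (List.ofFn f), by
          simp [wordOdd, mkL_length, List.length_ofFn]; omega⟩ :
          {w : W // w.toList.length = n})) := by
      intro f1 f2 h
      have := congrArg (fun z => (Subtype.val z).toList) h
      simp only [wordOdd, List.cons.injEq] at this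
      exact List.ofFn_injective (mkL_inj this.2)
    have := Nat.card_le_card_of_injective _ hinj
    simpa [Nat.card_eq_fintype_card, Fintype.card_fun] using this


-- ### spherical counts and growth rate

lemma sphericalCount_eq (n : ℕ) :
    sphericalCount automaticGens n = Nat.card {w : W // w.toList.length = n} :=
  Nat.card_congr (sphereEquiv n)

lemma count_lower (n : ℕ) : 3 ^ (n / 2) ≤ sphericalCount automaticGens n := by
  rw [sphericalCount_eq]; exact card_lower n

lemma count_upper (n : ℕ) : sphericalCount automaticGens n ≤ 2 * 3 ^ ((n + 1) / 2) := by
  rw [sphericalCount_eq]; exact card_upper n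

lemma tendsto_inv_nat : Tendsto (fun n : ℕ => ((n : ℝ))⁻¹) atTop (𝓝 0) :=
  tendsto_inv_atTop_zero.comp tendsto_natCast_atTop_atTop

lemma const_rpow_inv_nat (c : ℝ) (hc : c ≠ 0) :
    Tendsto (fun n : ℕ => c ^ ((n : ℝ))⁻¹) atTop (𝓝 1) := by
  have h := (Real.continuousAt_const_rpow (b := (0:ℝ)) hc).tendsto.comp tendsto_inv_nat
  simpa [Real.rpow_zero, Function.comp_def] using h

lemma exp_tendsto_aux (g : ℕ → ℕ) (hlo : ∀ n, n ≤ g n + 1) (hhi : ∀ n, g n ≤ n + 1) :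
    Tendsto (fun n : ℕ => ((g n : ℕ) : ℝ) * ((n : ℝ))⁻¹) atTop (𝓝 1) := by
  have hlow : Tendsto (fun n : ℕ => 1 - ((n:ℝ))⁻¹) atTop (𝓝 1) := by
    have h := Filter.Tendsto.sub
      (tendsto_const_nhds : Tendsto (fun _ : ℕ => (1:ℝ)) atTop (𝓝 1)) tendsto_inv_nat
    simpa using h
  have hhigh : Tendsto (fun n : ℕ => 1 + ((n:ℝ))⁻¹) atTop (𝓝 1) := by
    have h := Filter.Tendsto.add
      (tendsto_const_nhds : Tendsto (fun _ : ℕ => (1:ℝ)) atTop (𝓝 1)) tendsto_inv_nat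
    simpa using h
  apply tendsto_of_tendsto_of_tendsto_of_le_of_le' hlow hhigh
  · filter_upwards [eventually_ge_atTop 1] with n hn
    have hn0 : (0:ℝ) < n := by exact_mod_cast Nat.pos_of_ne_zero (by omega)
    have hne : (n:ℝ) ≠ 0 := ne_of_gt hn0
    have hg : ((n:ℝ)) - 1 ≤ (g n : ℝ) := by
      have := hlo n
      have : (n : ℝ) ≤ (g n : ℝ) + 1 := by exact_mod_cast this
      linarith
    calc 1 - (n:ℝ)⁻¹ = ((n:ℝ) - 1) * (n:ℝ)⁻¹ := by
          rw [sub_mul, mul_inv_cancel₀ hne, one_mul]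
      _ ≤ (g n : ℝ) * (n:ℝ)⁻¹ := by
          exact mul_le_mul_of_nonneg_right hg (inv_nonneg.2 hn0.le)
  · filter_upwards [eventually_ge_atTop 1] with n hn
    have hn0 : (0:ℝ) < n := by exact_mod_cast Nat.pos_of_ne_zero (by omega)
    have hne : (n:ℝ) ≠ 0 := ne_of_gt hn0
    have hg : (g n : ℝ) ≤ ((n:ℝ)) + 1 := by exact_mod_cast hhi n
    calc (g n : ℝ) * (n:ℝ)⁻¹ ≤ ((n:ℝ) + 1) * (n:ℝ)⁻¹ := by
          exact mul_le_mul_of_nonneg_right hg (inv_nonneg.2 hn0.le)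
      _ = 1 + (n:ℝ)⁻¹ := by rw [add_mul, mul_inv_cancel₀ hne, one_mul]

lemma sqrt3_pos : (0:ℝ) < Real.sqrt 3 := Real.sqrt_pos.2 (by norm_num)
lemma sqrt3_sq : (Real.sqrt 3) ^ 2 = 3 := Real.sq_sqrt (by norm_num)

lemma pow_half_eq (k : ℕ) : ((3 : ℝ)) ^ k = Real.sqrt 3 ^ (2 * k) := by
  rw [pow_mul, sqrt3_sq]

lemma growth_tendsto :
    Tendsto (fun n : ℕ => (sphericalCount automaticGens n : ℝ) ^ ((n : ℝ)⁻¹)) atTop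
      (𝓝 (Real.sqrt 3)) := by
  have hs3 : (0:ℝ) ≤ Real.sqrt 3 := Real.sqrt_nonneg 3
  have hs3ne : Real.sqrt 3 ≠ 0 := ne_of_gt sqrt3_pos
  have hL : Tendsto
      (fun n : ℕ => Real.sqrt 3 ^ (((2 * (n / 2) : ℕ) : ℝ) * ((n : ℝ))⁻¹)) atTop
      (𝓝 (Real.sqrt 3)) := by
    have he := exp_tendsto_aux (fun n => 2 * (n / 2))
      (fun n => by show n ≤ 2 * (n / 2) + 1; omega)
      (fun n => by show 2 * (n / 2) ≤ n + 1; omega)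
    have hc := (Real.continuousAt_const_rpow (b := (1:ℝ)) hs3ne).tendsto.comp he
    simpa [Real.rpow_one, Function.comp_def] using hc
  have hU : Tendsto
      (fun n : ℕ => (2:ℝ) ^ ((n : ℝ))⁻¹ *
        Real.sqrt 3 ^ (((2 * ((n + 1) / 2) : ℕ) : ℝ) * ((n : ℝ))⁻¹)) atTop
      (𝓝 (Real.sqrt 3)) := by
    have he := exp_tendsto_aux (fun n => 2 * ((n + 1) / 2))
      (fun n => by show n ≤ 2 * ((n + 1) / 2) + 1; omega)
      (fun n => by show 2 * ((n + 1) / 2) ≤ n + 1; omega)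
    have hc := (Real.continuousAt_const_rpow (b := (1:ℝ)) hs3ne).tendsto.comp he
    have h2 := const_rpow_inv_nat 2 (by norm_num)
    have := h2.mul hc
    simpa [Real.rpow_one] using this
  apply tendsto_of_tendsto_of_tendsto_of_le_of_le' hL hU
  · apply Eventually.of_forall
    intro n
    have hcount : ((3 ^ (n / 2) : ℕ) : ℝ) ≤ (sphericalCount automaticGens n : ℝ) := by
      exact_mod_cast count_lower n
    have hrw : Real.sqrt 3 ^ (((2 * (n / 2) : ℕ) : ℝ) * ((n : ℝ))⁻¹)
        = ((3 ^ (n / 2) : ℕ) : ℝ) ^ ((n : ℝ)⁻¹) := by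
      rw [Real.rpow_mul hs3, Real.rpow_natCast, ← pow_half_eq]
      norm_cast
    rw [hrw]
    exact Real.rpow_le_rpow (by positivity) hcount (by positivity)
  · apply Eventually.of_forall
    intro n
    have hcount : ((sphericalCount automaticGens n : ℕ) : ℝ)
        ≤ ((2 * 3 ^ ((n + 1) / 2) : ℕ) : ℝ) := by exact_mod_cast count_upper n
    have hrw : (2:ℝ) ^ ((n : ℝ))⁻¹ *
        Real.sqrt 3 ^ (((2 * ((n + 1) / 2) : ℕ) : ℝ) * ((n : ℝ))⁻¹)
        = ((2 * 3 ^ ((n + 1) / 2) : ℕ) : ℝ) ^ ((n : ℝ)⁻¹) := by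
      rw [Real.rpow_mul hs3, Real.rpow_natCast, ← pow_half_eq,
        ← Real.mul_rpow (by norm_num) (by positivity)]
      norm_cast
    rw [hrw]
    exact Real.rpow_le_rpow (by positivity) hcount (by positivity)

lemma growth_eq : sphericalGrowthRate automaticGens = Real.sqrt 3 :=
  growth_tendsto.limsup_eq

-- ### not Perron

lemma minpoly_sqrt3 : minpoly ℚ (Real.sqrt 3) = X ^ 2 - C (3:ℚ) := by
  have h3 : ∀ b : ℚ, b ^ 2 ≠ 3 := by
    intro b hb
    have hirr : Irrational (Real.sqrt 3) := by
      have := Nat.Prime.irrational_sqrt (p := 3) (by norm_num)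
      simpa using this
    apply hirr
    have hb' : ((b : ℝ)) ^ 2 = 3 := by exact_mod_cast hb
    refine ⟨|b|, ?_⟩
    rw [← hb', Real.sqrt_sq_eq_abs]
    push_cast
    rfl
  have hirr2 : Irreducible (X ^ 2 - C (3:ℚ)) :=
    X_pow_sub_C_irreducible_of_prime Nat.prime_two h3
  refine (minpoly.eq_of_irreducible_of_monic hirr2 ?_ (monic_X_pow_sub_C _ two_ne_zero)).symm
  simp only [map_sub, map_pow, aeval_X, aeval_C]
  rw [Real.sq_sqrt (by norm_num : (0:ℝ) ≤ 3)]
  norm_num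

lemma not_perron_sqrt3 : ¬ IsPerron (Real.sqrt 3) := by
  rintro ⟨-, -, h⟩
  have haev : aeval (-((Real.sqrt 3 : ℝ) : ℂ)) (minpoly ℚ (Real.sqrt 3)) = 0 := by
    rw [minpoly_sqrt3]
    simp only [map_sub, map_pow, aeval_X, aeval_C, neg_sq]
    rw [← Complex.ofReal_pow, Real.sq_sqrt (by norm_num : (0:ℝ) ≤ 3)]
    norm_num
  have hne : -((Real.sqrt 3 : ℝ) : ℂ) ≠ ((Real.sqrt 3 : ℝ) : ℂ) := by
    intro he
    rw [← Complex.ofReal_neg] at he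
    have := Complex.ofReal_injective he
    have := sqrt3_pos
    linarith
  have hlt := h _ haev hne
  have habs : ‖(-((Real.sqrt 3 : ℝ) : ℂ))‖ = Real.sqrt 3 := by
    rw [← Complex.ofReal_neg, Complex.norm_real, Real.norm_eq_abs, abs_neg,
      abs_of_nonneg (Real.sqrt_nonneg 3)]
  rw [habs] at hlt
  exact lt_irrefl _ hlt

end RacgAux

theorem spherical_growth_rate_automatic_gens :
    sphericalGrowthRate automaticGens = Real.sqrt 3 ∧
      1 < sphericalGrowthRate automaticGens ∧
      ¬ IsPerron (sphericalGrowthRate automaticGens) := by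
  have hg : sphericalGrowthRate automaticGens = Real.sqrt 3 := RacgAux.growth_eq
  refine ⟨hg, ?_, ?_⟩
  · rw [hg]
    rw [show (1:ℝ) = Real.sqrt 1 from Real.sqrt_one.symm]
    exact Real.sqrt_lt_sqrt (by norm_num) (by norm_num)
  · rw [hg]
    exact RacgAux.not_perron_sqrt3
end
end
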